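/- Let f : ℍ^{N×S} → ℝ be ℝ-differentiable at Q and let ν ∈ ℍ, ν ≠ 0. Then (∂f/∂Q)^ν = ∂f/∂Q^ν and ∂f/∂Q^{ν*} = ((∂f/∂Q)^ν)*, where ∂f/∂Q^ν denotes the N × S quaternion matrix with (n,s) entry ∂f/∂q_{ns}^ν, ∂f/∂Q^{ν*} the matrix with entries ∂f/∂q_{ns}^{ν*}, and the superscripts on matrices act entrywise (x^ν = νxν⁻¹, followed by conjugation for the second identity). -/

import Mathlib

open scoped Quaternion

noncomputable section

/-- The imaginary unit `i` of the quaternions. -/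
def qI : ℍ[ℝ] := ⟨0, 1, 0, 0⟩
/-- The imaginary unit `j` of the quaternions. -/
def qJ : ℍ[ℝ] := ⟨0, 0, 1, 0⟩
/-- The imaginary unit `k` of the quaternions. -/
def qK : ℍ[ℝ] := ⟨0, 0, 0, 1⟩

/-- The `N × S` quaternion matrix with entry `d` at position `(n,s)` and `0` elsewhere. -/
def single {N S : ℕ} (n : Fin N) (s : Fin S) (d : ℍ[ℝ]) : Fin N → Fin S → ℍ[ℝ] :=
  Pi.single n (Pi.single s d)

/-- Real directional (Fréchet) derivative of a real-valued function of a matrix variable, in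
the direction `d` at the single entry `(n,s)` (the other entries held fixed). -/
def pdR {N S : ℕ} (f : (Fin N → Fin S → ℍ[ℝ]) → ℝ) (Q : Fin N → Fin S → ℍ[ℝ])
    (n : Fin N) (s : Fin S) (d : ℍ[ℝ]) : ℝ :=
  fderiv ℝ f Q (single n s d)

/-- Left GHR derivative `∂f/∂q_{ns}^ν` of a real-valued function `f` with respect to the entry
`q_{ns}`: `¼(∂f/∂q_a − (∂f/∂q_b) i^ν − (∂f/∂q_c) j^ν − (∂f/∂q_d) k^ν)`, `x^ν = ν x ν⁻¹`. -/
def ghrER {N S : ℕ} (ν : ℍ[ℝ]) (f : (Fin N → Fin S → ℍ[ℝ]) → ℝ)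
    (Q : Fin N → Fin S → ℍ[ℝ]) (n : Fin N) (s : Fin S) : ℍ[ℝ] :=
  (1 / 4 : ℝ) • ((pdR f Q n s 1) • (1 : ℍ[ℝ]) - (pdR f Q n s qI) • (ν * qI * ν⁻¹)
    - (pdR f Q n s qJ) • (ν * qJ * ν⁻¹) - (pdR f Q n s qK) • (ν * qK * ν⁻¹))

/-- Conjugate left GHR derivative `∂f/∂q_{ns}^{ν*}` of a real-valued function `f`. -/
def ghrStarER {N S : ℕ} (ν : ℍ[ℝ]) (f : (Fin N → Fin S → ℍ[ℝ]) → ℝ)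
    (Q : Fin N → Fin S → ℍ[ℝ]) (n : Fin N) (s : Fin S) : ℍ[ℝ] :=
  (1 / 4 : ℝ) • ((pdR f Q n s 1) • (1 : ℍ[ℝ]) + (pdR f Q n s qI) • (ν * qI * ν⁻¹)
    + (pdR f Q n s qJ) • (ν * qJ * ν⁻¹) + (pdR f Q n s qK) • (ν * qK * ν⁻¹))

/-! For `ν ≠ 0`, `x ↦ ν x ν⁻¹` is `ℝ`-linear and fixes `1`, so it carries `∂f/∂q` (built from
`1, i, j, k`) to `∂f/∂q^ν` (built from `1, i^ν, j^ν, k^ν`). It also commutes with quaternion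
conjugation, so `i^ν, j^ν, k^ν` stay purely imaginary, and conjugating `∂f/∂q^ν` flips the signs
of its three imaginary terms, which gives `∂f/∂q^{ν*}`. -/

theorem Quaternion.star_conj {R : Type*} [Field R] [LinearOrder R] [IsStrictOrderedRing R]
    (ν u : ℍ[R]) : star (ν * u * ν⁻¹) = ν * star u * ν⁻¹ := by
  rw [show ν⁻¹ = (Quaternion.normSq ν)⁻¹ • star ν from rfl]
  simp only [star_mul, star_smul, star_star, mul_smul_comm, mul_assoc]

lemma star_conj_of_re_eq_zero (ν : ℍ[ℝ]) {u : ℍ[ℝ]} (hu : u.re = 0) :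
    star (ν * u * ν⁻¹) = -(ν * u * ν⁻¹) := by
  rw [Quaternion.star_conj, Quaternion.star_eq_neg.2 hu, mul_neg, neg_mul]

section GHR

variable {N S : ℕ} (ν : ℍ[ℝ]) (f : (Fin N → Fin S → ℍ[ℝ]) → ℝ) (Q : Fin N → Fin S → ℍ[ℝ])
  (n : Fin N) (s : Fin S)

lemma ghrER_eq_conj_ghrER_one (hν : ν ≠ 0) :
    ghrER ν f Q n s = ν * ghrER 1 f Q n s * ν⁻¹ := by
  simp only [ghrER, inv_one, mul_one, one_mul, mul_smul_comm, smul_mul_assoc, mul_sub, sub_mul,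
    mul_assoc, mul_inv_cancel₀ hν]

lemma star_ghrER : star (ghrER ν f Q n s) = ghrStarER ν f Q n s := by
  simp only [ghrER, ghrStarER, Quaternion.star_smul, star_sub, star_one,
    star_conj_of_re_eq_zero ν (u := qI) rfl, star_conj_of_re_eq_zero ν (u := qJ) rfl,
    star_conj_of_re_eq_zero ν (u := qK) rfl, smul_neg, sub_neg_eq_add]

end GHR

theorem ghr_real_rotation_conjugation_general {N S : ℕ} (ν : ℍ[ℝ]) (hν : ν ≠ 0)
    (f : (Fin N → Fin S → ℍ[ℝ]) → ℝ) (Q : Fin N → Fin S → ℍ[ℝ]) :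
    (fun (n : Fin N) (s : Fin S) => ν * ghrER (1 : ℍ[ℝ]) f Q n s * ν⁻¹) =
        (fun (n : Fin N) (s : Fin S) => ghrER ν f Q n s)
    ∧ (fun (n : Fin N) (s : Fin S) => ghrStarER ν f Q n s) =
        (fun (n : Fin N) (s : Fin S) => star (ν * ghrER (1 : ℍ[ℝ]) f Q n s * ν⁻¹)) := by
  refine ⟨funext₂ fun n s => (ghrER_eq_conj_ghrER_one ν f Q n s hν).symm,
    funext₂ fun n s => ?_⟩
  rw [← ghrER_eq_conj_ghrER_one ν f Q n s hν, star_ghrER]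

/-- **Rotation and conjugation rules for real-valued functions** (Lemma 2):
`(∂f/∂Q)^ν = ∂f/∂Q^ν` and `∂f/∂Q^{ν*} = ((∂f/∂Q)^ν)*`, entrywise. -/
theorem ghr_real_rotation_conjugation {N S : ℕ} (ν : ℍ[ℝ]) (hν : ν ≠ 0)
    (f : (Fin N → Fin S → ℍ[ℝ]) → ℝ) (Q : Fin N → Fin S → ℍ[ℝ])
    (hf : DifferentiableAt ℝ f Q) :
    (fun (n : Fin N) (s : Fin S) => ν * ghrER (1 : ℍ[ℝ]) f Q n s * ν⁻¹) =
        (fun (n : Fin N) (s : Fin S) => ghrER ν f Q n s)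
    ∧ (fun (n : Fin N) (s : Fin S) => ghrStarER ν f Q n s) =
        (fun (n : Fin N) (s : Fin S) => star (ν * ghrER (1 : ℍ[ℝ]) f Q n s * ν⁻¹)) :=
  ghr_real_rotation_conjugation_general ν hν f Q
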